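/- For each composition p = (p_1,...,p_l) of n with partial sums s_j = p_1 + ... + p_j, the residue at ν = n of the rational function ν ↦ Π_{j=1}^{l} 1/(s_j(ν - s_j)) equals n/(s_p · s_{p'}), i.e. equals n divided by (s_1 s_2 ··· s_l) times the product of partial sums of the reversed composition. -/

import Mathlib

/-- `psum L j` = the `j`-th left partial sum `s_j = p_1 + … + p_j` of a composition. -/
def psum (L : List ℕ) (j : ℕ) : ℕ := (L.take j).sum

/-- `spr L` = `s_p = s_1 s_2 ⋯ s_l`, the product of the partial sums. -/
def spr (L : List ℕ) : ℕ := ∏ j ∈ Finset.range L.length, psum L (j + 1)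

/-!
At `ν = n` only the factor of the last partial sum `s_l = n` has a pole, and it is simple:
multiplying by `ν - n` cancels it, so the residue is `1/n` times the value at `n` of the product
of the remaining factors, `∏_{0<j<l} 1/(s_j (n - s_j))`. Reversing a composition turns `s_k` into
`n - s_{l-k}`, so `s_{p'} = ∏_{j=0}^{l-1} (n - s_j)`, and
`s_p s_{p'} = n² ∏_{0<j<l} s_j (n - s_j)` because `s_l = n` and `s_0 = 0`.
-/

open Filter Topology Finset

section PartialSums

variable (L : List ℕ)

@[simp]
theorem psum_zero : psum L 0 = 0 := by simp [psum]

@[simp]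
theorem psum_length : psum L L.length = L.sum := by simp [psum]

theorem psum_add_sum_drop (j : ℕ) : psum L j + (L.drop j).sum = L.sum :=
  List.sum_take_add_sum_drop L j

theorem psum_le_sum (j : ℕ) : psum L j ≤ L.sum :=
  (psum_add_sum_drop L j).symm ▸ Nat.le_add_right _ _

theorem psum_reverse (k : ℕ) : psum L.reverse k = L.sum - psum L (L.length - k) := by
  have := psum_add_sum_drop L (L.length - k)
  simp only [psum, List.take_reverse, List.sum_reverse] at this ⊢
  omega

variable {L}

theorem psum_lt_sum (hpos : ∀ x ∈ L, 0 < x) {j : ℕ} (hj : j < L.length) :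
    psum L j < L.sum := by
  have hdrop : 0 < (L.drop j).sum :=
    List.sum_pos _ (fun x hx => hpos x (List.mem_of_mem_drop hx)) (by simpa using hj)
  have := psum_add_sum_drop L j
  omega

theorem psum_succ_pos (hpos : ∀ x ∈ L, 0 < x) {j : ℕ} (hj : j < L.length) :
    0 < psum L (j + 1) :=
  List.sum_pos _ (fun x hx => hpos x (List.mem_of_mem_take hx))
    (List.ne_nil_of_length_pos (by simp; omega))

end PartialSums

theorem cast_spr_reverse {R : Type*} [CommRing R] (L : List ℕ) :
    (spr L.reverse : R) = ∏ j ∈ range L.length, ((L.sum : R) - psum L j) := by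
  rw [spr, List.length_reverse, Nat.cast_prod, ← prod_range_reflect]
  refine prod_congr rfl fun j hj => ?_
  rw [psum_reverse, Nat.cast_sub (psum_le_sum L _)]
  congr 3
  have := mem_range.mp hj
  omega

theorem cast_spr_mul_spr_reverse {R : Type*} [CommRing R] {L : List ℕ} {m : ℕ}
    (hm : L.length = m + 1) :
    (spr L : R) * spr L.reverse =
      (L.sum : R) ^ 2 * ∏ j ∈ range m, ((psum L (j + 1) : R) * (L.sum - psum L (j + 1))) := by
  rw [cast_spr_reverse, spr, Nat.cast_prod, hm, prod_range_succ, prod_range_succ', ← hm,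
    psum_length, psum_zero, prod_mul_distrib]
  push_cast
  ring

theorem tendsto_residue_of_simple_pole {𝕜 : Type*} [NormedField 𝕜] {g : 𝕜 → 𝕜} {a c : 𝕜}
    (hc : c ≠ 0) (hg : ContinuousAt g a) :
    Tendsto (fun ν => (ν - a) * (g ν * (c * (ν - a))⁻¹)) (𝓝[≠] a) (𝓝 (g a / c)) := by
  refine ((hg.tendsto.div_const c).mono_left nhdsWithin_le_nhds).congr' ?_
  filter_upwards [self_mem_nhdsWithin] with ν hν
  have : ν - a ≠ 0 := sub_ne_zero.mpr hν
  field_simp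

theorem continuousAt_prod_inv_mul_sub {𝕜 : Type*} [NormedField 𝕜] (s : ℕ → 𝕜) {m : ℕ} {a : 𝕜}
    (hs : ∀ j < m, s j * (a - s j) ≠ 0) :
    ContinuousAt (fun ν => ∏ j ∈ range m, (s j * (ν - s j))⁻¹) a :=
  tendsto_finsetProd _ fun j hj =>
    (continuousAt_const.mul (continuousAt_id.sub continuousAt_const)).inv₀ (hs j (mem_range.mp hj))

theorem residue_of_composition_product_general (n : ℕ) (L : List ℕ)
    (hpos : ∀ x ∈ L, 0 < x) (hsum : L.sum = n) :
    Filter.Tendsto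
      (fun ν : ℝ => (ν - (n : ℝ)) * ∏ j ∈ Finset.range L.length,
        ((psum L (j + 1) : ℝ) * (ν - (psum L (j + 1) : ℝ)))⁻¹)
      (nhdsWithin (n : ℝ) {(n : ℝ)}ᶜ)
      (nhds ((n : ℝ) / ((spr L : ℝ) * spr L.reverse))) := by
  obtain rfl | ⟨m, hm⟩ : L = [] ∨ ∃ m, L.length = m + 1 := by
    cases L <;> simp
  · subst hsum
    simp only [List.length_nil, range_zero, prod_empty, mul_one, List.sum_nil, Nat.cast_zero,
      zero_div, sub_zero]
    exact tendsto_nhdsWithin_of_tendsto_nhds tendsto_id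
  have hn : (n : ℝ) ≠ 0 := by
    exact_mod_cast (hsum ▸ List.sum_pos L hpos (List.ne_nil_of_length_pos (by omega))).ne'
  have hfactor : ∀ j < m, (psum L (j + 1) : ℝ) * (n - psum L (j + 1)) ≠ 0 := fun j hj => by
    have h0 : psum L (j + 1) ≠ 0 := (psum_succ_pos hpos (by omega)).ne'
    have hne : psum L (j + 1) ≠ n := (hsum ▸ psum_lt_sum hpos (j := j + 1) (by omega)).ne
    exact mul_ne_zero (by exact_mod_cast h0) (sub_ne_zero.mpr (by exact_mod_cast hne.symm))
  have hlast : psum L (m + 1) = n := by rw [← hm, psum_length, hsum]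
  have hres := tendsto_residue_of_simple_pole hn
    (continuousAt_prod_inv_mul_sub (fun j => (psum L (j + 1) : ℝ)) hfactor)
  rw [hm, cast_spr_mul_spr_reverse hm, hsum]
  simp_rw [prod_range_succ, hlast]
  convert hres using 2
  rw [prod_inv_distrib]
  have hprod := prod_ne_zero_iff.mpr fun j hj => hfactor j (mem_range.mp hj)
  field_simp

/-- For each composition `p = (p_1,…,p_l)` of `n` with partial sums `s_j`, the residue at
`ν = n` of `ν ↦ Π_{j=1}^{l} 1/(s_j(ν-s_j))`, i.e. `lim_{ν→n} (ν-n) Π_j 1/(s_j(ν-s_j))`,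
equals `n/(s_p s_{p'})`. -/
theorem residue_of_composition_product (n : ℕ) (L : List ℕ)
    (hpos : ∀ x ∈ L, 0 < x) (hne : L ≠ []) (hsum : L.sum = n) :
    Filter.Tendsto
      (fun ν : ℝ => (ν - (n : ℝ)) * ∏ j ∈ Finset.range L.length,
        ((psum L (j + 1) : ℝ) * (ν - (psum L (j + 1) : ℝ)))⁻¹)
      (nhdsWithin (n : ℝ) {(n : ℝ)}ᶜ)
      (nhds ((n : ℝ) / ((spr L : ℝ) * spr L.reverse))) :=
  residue_of_composition_product_general n L hpos hsum
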